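/- Let H = S⁻ᵀDS⁻¹ be a Hamiltonian matrix with symplectic diagonalization (S symplectic, D = diag(d₁,d₁,…,d_m,d_m), all d_i > 0, d_max the largest d_i) and let V := (1/2)·S·diag(coth d₁, coth d₁,…, coth d_m, coth d_m)·Sᵀ be its covariance matrix. Then the complex matrix 2iΩV − I is invertible, and for every real t ≥ 0 the matrix (t/(t+1))·(2iΩV + I)(2iΩV − I)⁻¹ + (1/(t+1))·I is invertible with smallest singular value at least e^{−2 d_max}/‖S‖∞². -/

import Mathlib

/-!
Since `S` is symplectic, `Q := -ΩSΩ` is the inverse of `Sᵀ` and `ΩS = QΩ`, so `2iΩV = Q N Sᵀ` with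
`N = iΩ·diag(coth dᵢ)`. Because `Ω` commutes with the paired diagonal matrices and `(iΩ)² = 1`,
the matrices `diag a + iΩ·diag b` multiply like split-complex numbers `a + jb`. In this algebra
`N² = coth² D`, so `(N - 1)⁻¹ = (N + 1) sinh² D` and `(N + 1)(N - 1)⁻¹ = cosh 2D + iΩ sinh 2D`,
whose `2 × 2` blocks are Hermitian with smallest eigenvalue `cosh 2dᵢ - sinh 2dᵢ = e^{-2dᵢ}`.
A convex combination with `I` therefore has numerical range in `Re z ≥ e^{-2 d_max}`, which bounds
it below, and conjugating back by `Q` and `Sᵀ`, both of norm at most `‖S‖` (`Ω` is unitary), costs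
the factor `‖S‖²`.
-/

open Matrix

/-- The spectral norm (ℓ²→ℓ² operator norm, largest singular value) of a matrix. -/
noncomputable def spNorm {𝕜 : Type*} [RCLike 𝕜] {p q : Type*} [Fintype p] [Fintype q]
    [DecidableEq q] (A : Matrix p q 𝕜) : ℝ :=
  ‖LinearMap.toContinuousLinearMap (Matrix.toEuclideanLin A)‖

/-- Index set for `2m × 2m` matrices: the pair `(i, δ)` stands for the index `2i - δ`,
`(i, 0)` being the first index of the `i`-th pair and `(i, 1)` the second. -/
abbrev Idx (m : ℕ) := Fin m × Fin 2

/-- The standard symplectic form: block diagonal with `m` blocks `[[0,1],[-1,0]]`. -/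
def Omega (m : ℕ) : Matrix (Idx m) (Idx m) ℝ :=
  Matrix.of fun p q =>
    if p.1 = q.1 ∧ p.2 = 0 ∧ q.2 = 1 then 1
    else if p.1 = q.1 ∧ p.2 = 1 ∧ q.2 = 0 then -1 else 0

/-- The diagonal matrix `diag (d₁, d₁, …, d_m, d_m)`. -/
def pairDiag {m : ℕ} (d : Fin m → ℝ) : Matrix (Idx m) (Idx m) ℝ :=
  Matrix.diagonal fun p => d p.1

/-- Hyperbolic cotangent. -/
noncomputable def rcoth (x : ℝ) : ℝ := Real.cosh x / Real.sinh x

/-- A real matrix regarded as a complex matrix. -/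
def cplx {p q : Type*} (A : Matrix p q ℝ) : Matrix p q ℂ :=
  A.map (fun x => (x : ℂ))

open scoped Matrix.Norms.L2Operator

section Complexify

variable {n : Type*}

lemma cplx_mul [Fintype n] (A B : Matrix n n ℝ) : cplx (A * B) = cplx A * cplx B := by
  ext i j; simp [cplx, Matrix.mul_apply]

lemma cplx_one [DecidableEq n] : cplx (1 : Matrix n n ℝ) = 1 := by
  ext i j; by_cases h : i = j <;> simp [cplx, Matrix.one_apply, h]

lemma cplx_neg (A : Matrix n n ℝ) : cplx (-A) = -cplx A := by
  ext i j; simp [cplx]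

lemma cplx_transpose (A : Matrix n n ℝ) : cplx Aᵀ = (cplx A)ᴴ := by
  ext i j; simp [cplx]

lemma cplx_smul {p q : Type*} (r : ℝ) (A : Matrix p q ℝ) : cplx (r • A) = (r : ℂ) • cplx A := by
  ext i j; simp [cplx]

end Complexify

lemma EuclideanSpace.norm_sq_eq_norm_sq_re_add_norm_sq_im {q : Type*} [Fintype q]
    (v : EuclideanSpace ℂ q) :
    ‖v‖ ^ 2 = ‖WithLp.toLp 2 fun j => (v j).re‖ ^ 2 + ‖WithLp.toLp 2 fun j => (v j).im‖ ^ 2 := by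
  rw [EuclideanSpace.norm_sq_eq, EuclideanSpace.norm_sq_eq, EuclideanSpace.norm_sq_eq,
    ← Finset.sum_add_distrib]
  congr 1 with j
  rw [Complex.sq_norm, Complex.normSq_apply, Real.norm_eq_abs, Real.norm_eq_abs, sq_abs, sq_abs, sq, sq]

lemma norm_cplx_le {p q : Type*} [Fintype p] [Fintype q] [DecidableEq q] (A : Matrix p q ℝ) :
    ‖cplx A‖ ≤ ‖A‖ := by
  rw [Matrix.l2_opNorm_def]
  refine ContinuousLinearMap.opNorm_le_bound _ (norm_nonneg A) fun x => ?_
  set xr : EuclideanSpace ℝ q := WithLp.toLp 2 fun j => (x j).re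
  set xi : EuclideanSpace ℝ q := WithLp.toLp 2 fun j => (x j).im
  have hsq : ‖Matrix.toEuclideanLin (cplx A) x‖ ^ 2 =
      ‖Matrix.toEuclideanLin A xr‖ ^ 2 + ‖Matrix.toEuclideanLin A xi‖ ^ 2 := by
    rw [EuclideanSpace.norm_sq_eq_norm_sq_re_add_norm_sq_im]
    congr 4 <;> ext i <;> simp [cplx, Matrix.toLpLin_apply, Matrix.mulVec, dotProduct,
      Complex.re_sum, Complex.im_sum, xr, xi]
  refine (pow_le_pow_iff_left₀ (norm_nonneg _) (by positivity) two_ne_zero).mp ?_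
  rw [LinearEquiv.trans_apply, LinearMap.coe_toContinuousLinearMap', hsq, mul_pow,
    EuclideanSpace.norm_sq_eq_norm_sq_re_add_norm_sq_im x, mul_add, ← mul_pow, ← mul_pow]
  gcongr
  exacts [Matrix.l2_opNorm_mulVec A xr, Matrix.l2_opNorm_mulVec A xi]

lemma norm_cplx_transpose_le {n : Type*} [Fintype n] [DecidableEq n] (A : Matrix n n ℝ) :
    ‖cplx Aᵀ‖ ≤ ‖A‖ := by
  rw [cplx_transpose, Matrix.l2_opNorm_conjTranspose]
  exact norm_cplx_le A

lemma Omega_mul_self (m : ℕ) : Omega m * Omega m = -1 := by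
  ext ⟨i, δ⟩ ⟨j, ε⟩
  fin_cases δ <;> fin_cases ε <;>
    simp [Omega, Matrix.mul_apply, Fintype.sum_prod_type, Matrix.one_apply, eq_comm, neg_ite]

lemma Omega_transpose (m : ℕ) : (Omega m)ᵀ = -Omega m := by
  ext ⟨i, δ⟩ ⟨j, ε⟩
  fin_cases δ <;> fin_cases ε <;> simp [Omega, eq_comm, neg_ite]

lemma cplx_Omega_mem_unitary (m : ℕ) :
    cplx (Omega m) ∈ unitary (Matrix (Idx m) (Idx m) ℂ) := by
  have h : star (cplx (Omega m)) * cplx (Omega m) = 1 := by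
    rw [Matrix.star_eq_conjTranspose, ← cplx_transpose, Omega_transpose, cplx_neg, neg_mul,
      ← cplx_mul, Omega_mul_self, cplx_neg, cplx_one, neg_neg]
  exact Unitary.mem_iff.mpr ⟨h, mul_eq_one_comm.mp h⟩

def symplecticInvTranspose {m : ℕ} (S : Matrix (Idx m) (Idx m) ℝ) : Matrix (Idx m) (Idx m) ℝ :=
  -(Omega m * S * Omega m)

lemma symplecticInvTranspose_mul_transpose {m : ℕ} {S : Matrix (Idx m) (Idx m) ℝ}
    (hS : S * Omega m * Sᵀ = Omega m) : symplecticInvTranspose S * Sᵀ = 1 := by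
  rw [symplecticInvTranspose, neg_mul, mul_assoc, mul_assoc, ← mul_assoc S, hS, Omega_mul_self,
    neg_neg]

lemma Omega_mul_eq_symplecticInvTranspose_mul {m : ℕ} (S : Matrix (Idx m) (Idx m) ℝ) :
    Omega m * S = symplecticInvTranspose S * Omega m := by
  rw [symplecticInvTranspose, neg_mul, mul_assoc _ (Omega m), Omega_mul_self, mul_neg_one, neg_neg]

lemma norm_cplx_symplecticInvTranspose_le {m : ℕ} (S : Matrix (Idx m) (Idx m) ℝ) :
    ‖cplx (symplecticInvTranspose S)‖ ≤ ‖S‖ := by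
  rw [symplecticInvTranspose, cplx_neg, cplx_mul, cplx_mul, norm_neg,
    CStarRing.norm_mul_mem_unitary _ (cplx_Omega_mem_unitary m),
    CStarRing.norm_mem_unitary_mul _ (cplx_Omega_mem_unitary m)]
  exact norm_cplx_le S

section PairBlock

variable {m : ℕ}

noncomputable def pairBlock (a b : Fin m → ℝ) : Matrix (Idx m) (Idx m) ℂ :=
  cplx (pairDiag a) + Complex.I • cplx (Omega m * pairDiag b)

lemma pairBlock_apply (a b : Fin m → ℝ) (p q : Idx m) :
    pairBlock a b p q =
      if p.1 = q.1 then !![(a p.1 : ℂ), Complex.I * b p.1; -Complex.I * b p.1, a p.1] p.2 q.2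
      else 0 := by
  obtain ⟨i, δ⟩ := p
  obtain ⟨j, ε⟩ := q
  fin_cases δ <;> fin_cases ε <;>
    simp [pairBlock, cplx, pairDiag, Omega, Matrix.mul_diagonal] <;> split_ifs <;> simp_all

lemma pairBlock_mul (a b a' b' : Fin m → ℝ) :
    pairBlock a b * pairBlock a' b' = pairBlock (a * a' + b * b') (a * b' + b * a') := by
  ext ⟨i, δ⟩ ⟨j, ε⟩
  rw [Matrix.mul_apply, Fintype.sum_prod_type, Finset.sum_eq_single i
    (fun k _ hk => by simp [pairBlock_apply, Ne.symm hk]) (by simp)]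
  by_cases h : i = j
  · subst h
    fin_cases δ <;> fin_cases ε <;>
      simp [pairBlock_apply, Fin.sum_univ_two] <;> ring_nf <;> simp [Complex.I_sq]
  · simp [pairBlock_apply, h]

lemma pairBlock_add (a b a' b' : Fin m → ℝ) :
    pairBlock a b + pairBlock a' b' = pairBlock (a + a') (b + b') := by
  ext ⟨i, δ⟩ ⟨j, ε⟩
  fin_cases δ <;> fin_cases ε <;> by_cases h : i = j <;> simp [pairBlock_apply, h] <;> ring

lemma pairBlock_sub (a b a' b' : Fin m → ℝ) :
    pairBlock a b - pairBlock a' b' = pairBlock (a - a') (b - b') := by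
  ext ⟨i, δ⟩ ⟨j, ε⟩
  fin_cases δ <;> fin_cases ε <;> by_cases h : i = j <;> simp [pairBlock_apply, h] <;> ring

lemma smul_pairBlock_add_smul_one (r r' : ℝ) (a b : Fin m → ℝ) :
    (r : ℂ) • pairBlock a b + (r' : ℂ) • 1 = pairBlock (r • a + r' • 1) (r • b) := by
  ext ⟨i, δ⟩ ⟨j, ε⟩
  fin_cases δ <;> fin_cases ε <;> by_cases h : i = j <;>
    simp [pairBlock_apply, h] <;> ring

lemma pairBlock_one_zero : pairBlock (1 : Fin m → ℝ) 0 = 1 := by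
  ext ⟨i, δ⟩ ⟨j, ε⟩
  fin_cases δ <;> fin_cases ε <;> by_cases h : i = j <;> simp [pairBlock_apply, h, Matrix.one_apply]

lemma pairBlock_zero_left (c : Fin m → ℝ) :
    pairBlock 0 c = Complex.I • cplx (Omega m * pairDiag c) := by
  ext ⟨i, δ⟩ ⟨j, ε⟩
  fin_cases δ <;> fin_cases ε <;> by_cases h : i = j <;>
    simp [pairBlock_apply, h, cplx, pairDiag, Omega, Matrix.mul_diagonal]

lemma two_I_smul_Omega_mul_eq_conj_pairBlock (S : Matrix (Idx m) (Idx m) ℝ) (c : Fin m → ℝ) :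
    (2 * Complex.I) • (cplx (Omega m) * cplx ((1/2 : ℝ) • (S * pairDiag c * Sᵀ))) =
      cplx (symplecticInvTranspose S) * pairBlock 0 c * cplx Sᵀ := by
  rw [cplx_smul, mul_smul_comm, smul_smul, pairBlock_zero_left, ← cplx_mul, ← mul_assoc,
    ← mul_assoc, Omega_mul_eq_symplecticInvTranspose_mul, mul_assoc _ (Omega m), cplx_mul,
    cplx_mul, mul_smul_comm, smul_mul_assoc]
  congr 1
  push_cast
  ring

lemma pairBlock_cayley {d : Fin m → ℝ} (hd : ∀ i, d i ≠ 0) :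
    (pairBlock 0 (fun i => rcoth (d i)) - 1) *
        pairBlock (fun i => Real.sinh (d i) ^ 2) (fun i => rcoth (d i) * Real.sinh (d i) ^ 2) = 1 ∧
      (pairBlock 0 (fun i => rcoth (d i)) + 1) *
        pairBlock (fun i => Real.sinh (d i) ^ 2) (fun i => rcoth (d i) * Real.sinh (d i) ^ 2) =
      pairBlock (fun i => Real.cosh (2 * d i)) (fun i => Real.sinh (2 * d i)) := by
  have hs : ∀ i, Real.sinh (d i) ≠ 0 := fun i => Real.sinh_ne_zero.mpr (hd i)
  rw [← pairBlock_one_zero, pairBlock_sub, pairBlock_add, pairBlock_mul, pairBlock_mul]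
  refine ⟨congrArg₂ _ (funext fun i => ?_) (funext fun i => ?_),
    congrArg₂ _ (funext fun i => ?_) (funext fun i => ?_)⟩ <;>
    simp only [rcoth, Pi.add_apply, Pi.sub_apply, Pi.mul_apply, Pi.zero_apply, Pi.one_apply] <;>
    field_simp [hs i]
  · linear_combination Real.cosh_sq_sub_sinh_sq (d i)
  · ring
  · rw [Real.cosh_two_mul]; ring
  · rw [Real.sinh_two_mul]; ring

lemma pairBlock_mulVec (a b : Fin m → ℝ) (z : Idx m → ℂ) (j : Fin m) :
    (pairBlock a b *ᵥ z) (j, 0) = a j * z (j, 0) + Complex.I * b j * z (j, 1) ∧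
      (pairBlock a b *ᵥ z) (j, 1) = -Complex.I * b j * z (j, 0) + a j * z (j, 1) := by
  simp only [Matrix.mulVec, dotProduct, Fintype.sum_prod_type]
  constructor <;>
    rw [Finset.sum_eq_single j (fun k _ hk => by simp [pairBlock_apply, Ne.symm hk]) (by simp)] <;>
    simp [pairBlock_apply, Fin.sum_univ_two]

lemma le_re_pairBlock_quadForm (a b e : ℝ) (h : e ≤ a - |b|) (u v : ℂ) :
    e * (Complex.normSq u + Complex.normSq v) ≤
      ((a * u + Complex.I * b * v) * star u).re + ((-Complex.I * b * u + a * v) * star v).re := by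
  set N := Complex.normSq u + Complex.normSq v
  have key : ((a * u + Complex.I * b * v) * star u).re + ((-Complex.I * b * u + a * v) * star v).re
      = a * N - 2 * (b * (u.re * v.im - u.im * v.re)) := by
    simp only [N, RCLike.star_def, Complex.add_re, Complex.add_im, Complex.mul_re, Complex.mul_im,
      Complex.conj_re, Complex.conj_im, Complex.neg_re, Complex.neg_im, Complex.ofReal_re,
      Complex.ofReal_im, Complex.I_re, Complex.I_im, Complex.normSq_apply]
    ring
  have hcross : 2 * |b * (u.re * v.im - u.im * v.re)| ≤ |b| * N := by
    rw [abs_mul, mul_left_comm]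
    refine mul_le_mul_of_nonneg_left ?_ (abs_nonneg b)
    simp only [N, Complex.normSq_apply]
    cases abs_cases (u.re * v.im - u.im * v.re) <;>
      nlinarith [sq_nonneg (u.re - v.im), sq_nonneg (u.im + v.re),
        sq_nonneg (u.re + v.im), sq_nonneg (u.im - v.re)]
  have hN : 0 ≤ N := add_nonneg (Complex.normSq_nonneg u) (Complex.normSq_nonneg v)
  rw [key]
  nlinarith [le_abs_self (b * (u.re * v.im - u.im * v.re)), mul_le_mul_of_nonneg_right h hN]

lemma le_re_inner_pairBlock (a b : Fin m → ℝ) (e : ℝ) (h : ∀ j, e ≤ a j - |b j|)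
    (z : EuclideanSpace ℂ (Idx m)) :
    e * ‖z‖ ^ 2 ≤ (inner ℂ z (Matrix.toEuclideanLin (pairBlock a b) z)).re := by
  rw [EuclideanSpace.norm_sq_eq, EuclideanSpace.inner_eq_star_dotProduct]
  simp only [dotProduct, Fintype.sum_prod_type, Fin.sum_univ_two, Finset.mul_sum, Complex.re_sum,
    Complex.add_re, Complex.sq_norm]
  refine Finset.sum_le_sum fun j _ => ?_
  obtain ⟨h0, h1⟩ := pairBlock_mulVec a b z j
  have := le_re_pairBlock_quadForm (a j) (b j) e (h j) (z (j, 0)) (z (j, 1))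
  rwa [← h0, ← h1] at this

end PairBlock

section OperatorBounds

variable {𝕜 : Type*} [RCLike 𝕜] {n : Type*} [Fintype n] [DecidableEq n]

lemma mul_norm_le_norm_of_le_re_inner {E : Type*} [NormedAddCommGroup E] [InnerProductSpace 𝕜 E]
    {f : E → E} {e : ℝ} (h : ∀ z, e * ‖z‖ ^ 2 ≤ RCLike.re (inner 𝕜 z (f z))) (z : E) :
    e * ‖z‖ ≤ ‖f z‖ := by
  rcases eq_or_ne z 0 with rfl | hz
  · simp
  have hz' : 0 < ‖z‖ := norm_pos_iff.mpr hz
  have hcs : RCLike.re (inner 𝕜 z (f z)) ≤ ‖z‖ * ‖f z‖ :=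
    (RCLike.re_le_norm _).trans (norm_inner_le_norm z (f z))
  nlinarith [h z]

lemma isUnit_of_mul_norm_le_norm_toEuclideanLin {A : Matrix n n 𝕜} {e : ℝ} (he : 0 < e)
    (h : ∀ z, e * ‖z‖ ≤ ‖Matrix.toEuclideanLin A z‖) : IsUnit A := by
  refine Matrix.mulVec_injective_iff_isUnit.mp fun v w hvw => ?_
  have hsub := h (WithLp.toLp 2 (v - w))
  rw [Matrix.toLpLin_toLp, Matrix.toLin'_apply, Matrix.mulVec_sub, hvw, sub_self,
    WithLp.toLp_zero, norm_zero, ← mul_zero e] at hsub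
  have hvw0 := norm_le_zero_iff.mp (le_of_mul_le_mul_left hsub he)
  rwa [WithLp.toLp_eq_zero, sub_eq_zero] at hvw0

lemma div_sq_mul_norm_le_norm_toEuclideanLin_conj {Q G P : Matrix n n 𝕜} {e s : ℝ}
    (hQP : Q * P = 1) (hQ : ‖Q‖ ≤ s) (hP : ‖P‖ ≤ s) (he : 0 ≤ e)
    (hG : ∀ y, e * ‖y‖ ≤ ‖Matrix.toEuclideanLin G y‖) (x : EuclideanSpace 𝕜 n) :
    e / s ^ 2 * ‖x‖ ≤ ‖Matrix.toEuclideanLin (Q * G * P) x‖ := by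
  let T := Matrix.toEuclideanCLM (n := n) (𝕜 := 𝕜)
  have hs : 0 ≤ s := (norm_nonneg Q).trans hQ
  have hbound : ∀ {A : Matrix n n 𝕜} (y), ‖A‖ ≤ s → ‖T A y‖ ≤ s * ‖y‖ := fun y hA =>
    ((T _).le_opNorm y).trans (mul_le_mul_of_nonneg_right hA (norm_nonneg y))
  have hmul : ∀ A B y, T (A * B) y = T A (T B y) := fun A B y => by rw [map_mul]; rfl
  have hid : ∀ y, T 1 y = y := fun y => by rw [map_one]; rfl
  have hPx : ‖x‖ ≤ s * ‖T P x‖ := by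
    conv_lhs => rw [← hid x, ← hQP, hmul]
    exact hbound _ hQ
  have hGPx : ‖T G (T P x)‖ ≤ s * ‖T (Q * G * P) x‖ := by
    have hGP : T G (T P x) = T P (T (Q * G * P) x) := by
      rw [hmul, hmul, ← hmul P Q, mul_eq_one_comm.mp hQP, hid]
    rw [hGP]
    exact hbound _ hP
  have key : e * ‖x‖ ≤ s ^ 2 * ‖T (Q * G * P) x‖ :=
    calc e * ‖x‖ ≤ e * (s * ‖T P x‖) := by gcongr
      _ = s * (e * ‖T P x‖) := by ring
      _ ≤ s * (s * ‖T (Q * G * P) x‖) :=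
          mul_le_mul_of_nonneg_left ((hG _).trans hGPx) hs
      _ = s ^ 2 * ‖T (Q * G * P) x‖ := by ring
  rcases hs.eq_or_lt with rfl | hs'
  · simp
  · rw [div_mul_eq_mul_div, div_le_iff₀ (by positivity)]
    exact key.trans_eq (mul_comm _ _)

lemma isUnit_sub_one_and_cayley_eq_of_conj {K : Type*} [Field K] {Q P N X : Matrix n n K}
    (hQP : Q * P = 1) (hX : (N - 1) * X = 1) :
    IsUnit (Q * N * P - 1) ∧ (Q * N * P + 1) * (Q * N * P - 1)⁻¹ = Q * ((N + 1) * X) * P := by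
  have hconj : ∀ A A', Q * A * P * (Q * A' * P) = Q * (A * A') * P := fun A A' => by
    simp only [mul_assoc]; rw [← mul_assoc P Q, mul_eq_one_comm.mp hQP, one_mul]
  have hsub : Q * N * P - 1 = Q * (N - 1) * P := by rw [mul_sub, sub_mul, mul_one, hQP]
  have hadd : Q * N * P + 1 = Q * (N + 1) * P := by rw [mul_add, add_mul, mul_one, hQP]
  have hinv : (Q * N * P - 1) * (Q * X * P) = 1 := by rw [hsub, hconj, hX, mul_one, hQP]
  refine ⟨(Matrix.isUnit_iff_isUnit_det _).mpr (Matrix.isUnit_det_of_right_inverse hinv), ?_⟩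
  rw [Matrix.inv_eq_right_inv hinv, hadd, hconj]

lemma isUnit_conj_of_mul_eq_one {K : Type*} [Field K] {Q P G : Matrix n n K} (hQP : Q * P = 1)
    (hG : IsUnit G) : IsUnit (Q * G * P) :=
  (((Matrix.isUnit_iff_isUnit_det _).mpr (Matrix.isUnit_det_of_right_inverse hQP)).mul hG).mul
    ((Matrix.isUnit_iff_isUnit_det _).mpr (Matrix.isUnit_det_of_left_inverse hQP))

end OperatorBounds

lemma exp_neg_le_cosh_sub_abs_sinh_convex {x D t : ℝ} (hx : 0 ≤ x) (hxD : x ≤ D) (ht : 0 ≤ t) :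
    Real.exp (-D) ≤
      t / (t + 1) * Real.cosh x + 1 / (t + 1) - |t / (t + 1) * Real.sinh x| := by
  have ht1 : 0 < t + 1 := by linarith
  have hsinh : 0 ≤ t / (t + 1) * Real.sinh x :=
    mul_nonneg (div_nonneg ht ht1.le) (Real.sinh_nonneg_iff.mpr hx)
  have hxD' : Real.exp (-D) ≤ Real.exp (-x) := Real.exp_le_exp.mpr (neg_le_neg hxD)
  have hD1 : Real.exp (-D) ≤ 1 := Real.exp_le_one_iff.mpr (by linarith)
  rw [abs_of_nonneg hsinh, add_sub_right_comm, ← mul_sub, Real.cosh_sub_sinh]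
  calc Real.exp (-D) = t / (t + 1) * Real.exp (-D) + 1 / (t + 1) * Real.exp (-D) := by
        field_simp
    _ ≤ t / (t + 1) * Real.exp (-x) + 1 / (t + 1) := by
        gcongr
        exact mul_le_of_le_one_right (by positivity) hD1

theorem statement2_general {m : ℕ}
    (S : Matrix (Idx m) (Idx m) ℝ) (hS : S * Omega m * Sᵀ = Omega m)
    (d : Fin m → ℝ) (hd : ∀ i, 0 < d i)
    (dmax : ℝ) (hdmax_le : ∀ i, d i ≤ dmax)
    (V : Matrix (Idx m) (Idx m) ℝ)
    (hV : V = (1/2 : ℝ) • (S * pairDiag (fun i => rcoth (d i)) * Sᵀ))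
    (B : Matrix (Idx m) (Idx m) ℂ)
    (hB : B = (2 * Complex.I) • (cplx (Omega m) * cplx V)) :
    IsUnit (B - 1) ∧
    ∀ t : ℝ, 0 ≤ t →
      IsUnit (((t/(t+1) : ℝ) : ℂ) • ((B + 1) * (B - 1)⁻¹) + ((1/(t+1) : ℝ) : ℂ) • 1) ∧
      ∀ x : EuclideanSpace ℂ (Idx m),
        (Real.exp (-2 * dmax) / spNorm S ^ 2) * ‖x‖ ≤
          ‖Matrix.toEuclideanLin
            (((t/(t+1) : ℝ) : ℂ) • ((B + 1) * (B - 1)⁻¹) + ((1/(t+1) : ℝ) : ℂ) • 1) x‖ := by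
  set Q := cplx (symplecticInvTranspose S)
  set P := cplx Sᵀ
  have hQP : Q * P = 1 := by rw [← cplx_mul, symplecticInvTranspose_mul_transpose hS, cplx_one]
  have hBconj : B = Q * pairBlock 0 (fun i => rcoth (d i)) * P := by
    rw [hB, hV, two_I_smul_Omega_mul_eq_conj_pairBlock]
  obtain ⟨hX, hF⟩ := pairBlock_cayley fun i => (hd i).ne'
  obtain ⟨hunit, hcayley⟩ := isUnit_sub_one_and_cayley_eq_of_conj hQP hX
  rw [← hBconj] at hunit hcayley
  refine ⟨hunit, fun t ht => ?_⟩
  set a : Fin m → ℝ := (t / (t + 1)) • (fun i => Real.cosh (2 * d i)) + (1 / (t + 1)) • 1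
  set b : Fin m → ℝ := (t / (t + 1)) • fun i => Real.sinh (2 * d i)
  have hG : ((t / (t + 1) : ℝ) : ℂ) • ((B + 1) * (B - 1)⁻¹) + ((1 / (t + 1) : ℝ) : ℂ) • 1 =
      Q * pairBlock a b * P := by
    rw [hcayley, hF, ← smul_pairBlock_add_smul_one, mul_add, add_mul, mul_smul_comm,
      smul_mul_assoc, mul_smul_comm, smul_mul_assoc, mul_one, hQP]
  have hcoer : ∀ z, Real.exp (-2 * dmax) * ‖z‖ ≤ ‖Matrix.toEuclideanLin (pairBlock a b) z‖ :=
    mul_norm_le_norm_of_le_re_inner (𝕜 := ℂ) <| le_re_inner_pairBlock a b _ fun j => by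
      simpa [a, b, neg_mul] using exp_neg_le_cosh_sub_abs_sinh_convex (by linarith [hd j])
        (by linarith [hdmax_le j] : 2 * d j ≤ 2 * dmax) ht
  rw [hG]
  exact ⟨isUnit_conj_of_mul_eq_one hQP
      (isUnit_of_mul_norm_le_norm_toEuclideanLin (Real.exp_pos _) hcoer),
    div_sq_mul_norm_le_norm_toEuclideanLin_conj hQP (norm_cplx_symplecticInvTranspose_le S)
      (norm_cplx_transpose_le S) (Real.exp_pos _).le hcoer⟩

/-- For a Gaussian Hamiltonian with covariance matrix `V`, the matrix
`2iΩV - I` is invertible, and for every `t ≥ 0` the matrix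
`(t/(t+1))·(2iΩV + I)(2iΩV - I)⁻¹ + (1/(t+1))·I` is invertible with smallest singular
value at least `e^{-2 d_max}/‖S‖∞²`. -/
theorem statement2 {m : ℕ} (hm : 0 < m)
    (S : Matrix (Idx m) (Idx m) ℝ) (hS : S * Omega m * Sᵀ = Omega m)
    (d : Fin m → ℝ) (hd : ∀ i, 0 < d i)
    (dmax : ℝ) (hdmax_le : ∀ i, d i ≤ dmax) (hdmax_mem : ∃ i, d i = dmax)
    (H : Matrix (Idx m) (Idx m) ℝ) (hH : H = (S⁻¹)ᵀ * pairDiag d * S⁻¹)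
    (V : Matrix (Idx m) (Idx m) ℝ)
    (hV : V = (1/2 : ℝ) • (S * pairDiag (fun i => rcoth (d i)) * Sᵀ))
    (B : Matrix (Idx m) (Idx m) ℂ)
    (hB : B = (2 * Complex.I) • (cplx (Omega m) * cplx V)) :
    IsUnit (B - 1) ∧
    ∀ t : ℝ, 0 ≤ t →
      IsUnit (((t/(t+1) : ℝ) : ℂ) • ((B + 1) * (B - 1)⁻¹) + ((1/(t+1) : ℝ) : ℂ) • 1) ∧
      ∀ x : EuclideanSpace ℂ (Idx m),
        (Real.exp (-2 * dmax) / spNorm S ^ 2) * ‖x‖ ≤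
          ‖Matrix.toEuclideanLin
            (((t/(t+1) : ℝ) : ℂ) • ((B + 1) * (B - 1)⁻¹) + ((1/(t+1) : ℝ) : ℂ) • 1) x‖ :=
  statement2_general S hS d hd dmax hdmax_le V hV B hB
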